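/- If a tripartite density matrix ρ_ABC saturates strong subadditivity, i.e., S(ρ_A) + S(ρ_ABC) = S(ρ_AB) + S(ρ_AC), then C(ρ_AB) + C(ρ_AC) ≥ C(ρ_ABC), where C is the relative entropy of coherence in a fixed product basis. -/

import Mathlib

open Matrix ComplexOrder

/-- The von Neumann entropy `S(ρ) = -Tr(ρ log ρ)` via eigenvalues (0 if not Hermitian). -/
noncomputable def vnEnt {ι : Type} [Fintype ι] [DecidableEq ι] (ρ : Matrix ι ι ℂ) : ℝ :=
  if h : ρ.IsHermitian then ∑ i, Real.negMulLog (h.eigenvalues i) else 0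

/-- The dephasing (diagonal part) of a matrix in the fixed product basis. -/
noncomputable def deph {ι : Type} [Fintype ι] [DecidableEq ι] (ρ : Matrix ι ι ℂ) :
    Matrix ι ι ℂ :=
  Matrix.diagonal (fun k => ρ k k)

/-- Relative entropy of coherence `C(ρ) = S(ρ_I) − S(ρ)`. -/
noncomputable def cohRE {ι : Type} [Fintype ι] [DecidableEq ι] (ρ : Matrix ι ι ℂ) : ℝ :=
  vnEnt (deph ρ) - vnEnt ρ

variable {a b c : ℕ}

/-- Partial trace over the third subsystem. -/
noncomputable def ptrC (ρ : Matrix (Fin a × Fin b × Fin c) (Fin a × Fin b × Fin c) ℂ) :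
    Matrix (Fin a × Fin b) (Fin a × Fin b) ℂ :=
  fun p q => ∑ k : Fin c, ρ (p.1, p.2, k) (q.1, q.2, k)

/-- Partial trace over the second subsystem. -/
noncomputable def ptrB (ρ : Matrix (Fin a × Fin b × Fin c) (Fin a × Fin b × Fin c) ℂ) :
    Matrix (Fin a × Fin c) (Fin a × Fin c) ℂ :=
  fun p q => ∑ k : Fin b, ρ (p.1, k, p.2) (q.1, k, q.2)

/-- Partial trace over the second and third subsystems. -/
noncomputable def ptrBC (ρ : Matrix (Fin a × Fin b × Fin c) (Fin a × Fin b × Fin c) ℂ) :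
    Matrix (Fin a) (Fin a) ℂ :=
  fun p q => ∑ j : Fin b, ∑ k : Fin c, ρ (p, j, k) (q, j, k)

/-! Dephasing in the product basis commutes with the partial traces, so the dephased entropies are
the Shannon entropies of the diagonal `p` of `ρ` and of its marginals. Saturation trades
`S(ρ_AB) + S(ρ_AC)` for `S(ρ_A) + S(ρ)`, which reduces the claim to
`H(p) + S(ρ_A) ≤ H(p_AB) + H(p_AC)`. This follows from `S(ρ_A) ≤ H(p_A)` (the diagonal of a
Hermitian matrix is a doubly stochastic average of its eigenvalues, and `negMulLog` is concave)
and classical strong subadditivity `H(p) + H(p_A) ≤ H(p_AB) + H(p_AC)`, a sum of pointwise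
instances of `log t ≤ t - 1`. -/

namespace Matrix

variable {n : Type} [Fintype n] [DecidableEq n]

lemma sum_normSq_row_eq_one {U : Matrix n n ℂ} (hU : U ∈ unitaryGroup n ℂ)
    (i : n) : ∑ j, Complex.normSq (U i j) = 1 := by
  have h := congr_fun (congr_fun ((mem_unitaryGroup_iff).mp hU) i) i
  simp only [mul_apply, star_apply, Complex.star_def, Complex.mul_conj, one_apply_eq] at h
  exact_mod_cast h

lemma sum_normSq_col_eq_one {U : Matrix n n ℂ} (hU : U ∈ unitaryGroup n ℂ)
    (j : n) : ∑ i, Complex.normSq (U i j) = 1 := by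
  simpa [star_apply] using sum_normSq_row_eq_one (Unitary.star_mem hU) j

lemma IsHermitian.re_apply_self_eq_sum {A : Matrix n n ℂ} (hA : A.IsHermitian) (k : n) :
    (A k k).re = ∑ j, Complex.normSq (hA.eigenvectorUnitary k j) * hA.eigenvalues j := by
  conv_lhs => rw [hA.spectral_theorem]
  rw [Unitary.conjStarAlgAut_apply, mul_apply, Complex.re_sum]
  refine Finset.sum_congr rfl fun j _ => ?_
  rw [mul_diagonal, star_apply, mul_right_comm, Complex.star_def, Complex.mul_conj]
  simp

lemma IsHermitian.map_eigenvalues_diagonal (d : n → ℝ)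
    (h : (diagonal fun i => (d i : ℂ)).IsHermitian) :
    Finset.univ.val.map h.eigenvalues = Finset.univ.val.map d := by
  apply Multiset.map_injective Complex.ofReal_injective
  have := h.roots_charpoly_eq_eigenvalues
  rw [charpoly_diagonal, Polynomial.roots_prod _ _
    (by simp [Finset.prod_ne_zero_iff, Polynomial.X_sub_C_ne_zero])] at this
  simpa [Multiset.map_map] using this.symm

end Matrix

lemma vnEnt_diagonal {n : Type} [Fintype n] [DecidableEq n] (d : n → ℝ) :
    vnEnt (diagonal fun i => (d i : ℂ)) = ∑ i, Real.negMulLog (d i) := by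
  have h : (diagonal fun i => (d i : ℂ)).IsHermitian :=
    isHermitian_diagonal_of_self_adjoint _ (funext fun i => Complex.conj_ofReal _)
  rw [vnEnt, dif_pos h]
  calc ∑ i, Real.negMulLog (h.eigenvalues i)
      = ((Finset.univ.val.map h.eigenvalues).map Real.negMulLog).sum := by
        rw [Multiset.map_map]; rfl
    _ = ∑ i, Real.negMulLog (d i) := by
        rw [h.map_eigenvalues_diagonal, Multiset.map_map]; rfl

lemma vnEnt_deph {n : Type} [Fintype n] [DecidableEq n] {ρ : Matrix n n ℂ} (hρ : ρ.IsHermitian) :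
    vnEnt (deph ρ) = ∑ k, Real.negMulLog (ρ k k).re := by
  have h : deph ρ = diagonal fun k => ((ρ k k).re : ℂ) :=
    congr_arg diagonal (funext fun k => (hρ.coe_re_apply_self k).symm)
  rw [h, vnEnt_diagonal]

lemma vnEnt_le_sum_negMulLog_diag {n : Type} [Fintype n] [DecidableEq n] {ρ : Matrix n n ℂ}
    (hρ : ρ.PosSemidef) : vnEnt ρ ≤ ∑ k, Real.negMulLog (ρ k k).re := by
  have hU := hρ.isHermitian.eigenvectorUnitary.2
  set w : n → n → ℝ := fun k j => Complex.normSq (hρ.isHermitian.eigenvectorUnitary k j)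
  set ev := hρ.isHermitian.eigenvalues
  rw [vnEnt, dif_pos hρ.isHermitian]
  calc ∑ j, Real.negMulLog (ev j)
      = ∑ k, ∑ j, w k j * Real.negMulLog (ev j) := by
        rw [Finset.sum_comm]
        refine Finset.sum_congr rfl fun j _ => ?_
        rw [← Finset.sum_mul, sum_normSq_col_eq_one hU j, one_mul]
    _ ≤ ∑ k, Real.negMulLog (∑ j, w k j * ev j) := Finset.sum_le_sum fun k _ =>
        Real.concaveOn_negMulLog.le_map_sum (fun j _ => Complex.normSq_nonneg _)
          (sum_normSq_row_eq_one hU k) fun j _ => hρ.eigenvalues_nonneg j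
    _ = ∑ k, Real.negMulLog (ρ k k).re := by
        simp only [hρ.isHermitian.re_apply_self_eq_sum, w, ev]

lemma negMulLog_sub_mul_log_le {p x y z : ℝ} (hp : 0 ≤ p) (hx : p ≤ x) (hy : p ≤ y)
    (hz : p ≤ z) :
    Real.negMulLog p - p * Real.log z
      ≤ -(p * Real.log x) - p * Real.log y + x * y / z - p := by
  rcases hp.eq_or_lt with rfl | hp
  · simp only [Real.negMulLog_zero, zero_mul, sub_zero, neg_zero, zero_add]
    exact div_nonneg (mul_nonneg hx hy) hz
  have hx := hp.trans_le hx
  have hy := hp.trans_le hy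
  have hz := hp.trans_le hz
  have hlog := Real.log_le_sub_one_of_pos (show 0 < x * y / (p * z) by positivity)
  rw [Real.log_div (by positivity) (by positivity), Real.log_mul hx.ne' hy.ne',
    Real.log_mul hp.ne' hz.ne'] at hlog
  have hmul := mul_le_mul_of_nonneg_left hlog hp.le
  rw [mul_sub p _ 1, mul_one, mul_div_assoc', mul_div_mul_left _ _ hp.ne'] at hmul
  rw [Real.negMulLog]
  linarith

theorem negMulLog_strongSubadditivity {A B C : Type} [Fintype A] [Fintype B] [Fintype C]
    (p : A → B → C → ℝ) (hp : ∀ i j k, 0 ≤ p i j k) :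
    (∑ i, ∑ j, ∑ k, Real.negMulLog (p i j k)) + ∑ i, Real.negMulLog (∑ j, ∑ k, p i j k)
      ≤ (∑ i, ∑ j, Real.negMulLog (∑ k, p i j k)) + ∑ i, ∑ k, Real.negMulLog (∑ j, p i j k) := by
  have hAB : ∀ i j k, p i j k ≤ ∑ k, p i j k := fun i j k =>
    Finset.single_le_sum (fun k _ => hp i j k) (Finset.mem_univ k)
  have hAC : ∀ i j k, p i j k ≤ ∑ j, p i j k := fun i j k =>
    Finset.single_le_sum (fun j _ => hp i j k) (Finset.mem_univ j)
  have hA : ∀ i j k, p i j k ≤ ∑ j, ∑ k, p i j k := fun i j k =>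
    (hAB i j k).trans (Finset.single_le_sum (fun j _ => Finset.sum_nonneg fun k _ => hp i j k)
      (Finset.mem_univ j))
  have hgibbs := Finset.sum_le_sum fun i (_ : i ∈ Finset.univ) =>
    Finset.sum_le_sum fun j (_ : j ∈ Finset.univ) =>
      Finset.sum_le_sum fun k (_ : k ∈ Finset.univ) =>
        negMulLog_sub_mul_log_le (hp i j k) (hAB i j k) (hAC i j k) (hA i j k)
  -- also where `∑ j, ∑ k, p i j k = 0`, as `x / 0 = 0`
  have hprod : ∀ i, ∑ j, ∑ k, (∑ k, p i j k) * (∑ j, p i j k) / ∑ j, ∑ k, p i j k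
      = ∑ j, ∑ k, p i j k := by
    intro i
    simp_rw [← Finset.sum_div, ← Finset.mul_sum, ← Finset.sum_mul]
    rw [Finset.sum_comm (γ := C), mul_self_div_self]
  have eA : ∀ i, Real.negMulLog (∑ j, ∑ k, p i j k)
      = -∑ j, ∑ k, p i j k * Real.log (∑ j, ∑ k, p i j k) := by
    intro i
    simp only [Real.negMulLog, neg_mul, Finset.sum_mul]
  have eAB : ∀ i j, Real.negMulLog (∑ k, p i j k) = -∑ k, p i j k * Real.log (∑ k, p i j k) := by
    intro i j
    simp only [Real.negMulLog, neg_mul, Finset.sum_mul]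
  have eAC : ∀ i, ∑ k, Real.negMulLog (∑ j, p i j k)
      = -∑ j, ∑ k, p i j k * Real.log (∑ j, p i j k) := by
    intro i
    simp only [Real.negMulLog, neg_mul, Finset.sum_mul, Finset.sum_neg_distrib]
    rw [Finset.sum_comm]
  simp only [Finset.sum_add_distrib, Finset.sum_sub_distrib, Finset.sum_neg_distrib, hprod]
    at hgibbs
  simp only [eA, eAB, eAC, Finset.sum_neg_distrib]
  linarith

section PartialTrace

variable {ρ : Matrix (Fin a × Fin b × Fin c) (Fin a × Fin b × Fin c) ℂ}

lemma posSemidef_ptrC (hρ : ρ.PosSemidef) : (ptrC ρ).PosSemidef := by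
  have h : ptrC ρ = ∑ k, ρ.submatrix (fun p => (p.1, p.2, k)) (fun p => (p.1, p.2, k)) := by
    ext p q
    simp [ptrC, Matrix.sum_apply]
  exact h ▸ posSemidef_sum _ fun k _ => hρ.submatrix _

lemma posSemidef_ptrB (hρ : ρ.PosSemidef) : (ptrB ρ).PosSemidef := by
  have h : ptrB ρ = ∑ j, ρ.submatrix (fun p => (p.1, j, p.2)) (fun p => (p.1, j, p.2)) := by
    ext p q
    simp [ptrB, Matrix.sum_apply]
  exact h ▸ posSemidef_sum _ fun j _ => hρ.submatrix _

lemma posSemidef_ptrBC (hρ : ρ.PosSemidef) : (ptrBC ρ).PosSemidef := by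
  have h : ptrBC ρ = ∑ j, ∑ k, ρ.submatrix (fun i => (i, j, k)) (fun i => (i, j, k)) := by
    ext p q
    simp [ptrBC, Matrix.sum_apply]
  exact h ▸ posSemidef_sum _ fun j _ => posSemidef_sum _ fun k _ => hρ.submatrix _

end PartialTrace

theorem saturated_SSA_implies_subadditivity_general
    (ρ : Matrix (Fin a × Fin b × Fin c) (Fin a × Fin b × Fin c) ℂ)
    (hρ : ρ.PosSemidef)
    (hSSA : vnEnt (ptrBC ρ) + vnEnt ρ = vnEnt (ptrC ρ) + vnEnt (ptrB ρ)) :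
    cohRE ρ ≤ cohRE (ptrC ρ) + cohRE (ptrB ρ) := by
  set p : Fin a → Fin b → Fin c → ℝ := fun i j k => (ρ (i, j, k) (i, j, k)).re
  have hp : ∀ i j k, 0 ≤ p i j k := fun i j k => (Complex.nonneg_iff.mp hρ.diag_nonneg).1
  have hABC : vnEnt (deph ρ) = ∑ i, ∑ j, ∑ k, Real.negMulLog (p i j k) := by
    simp only [vnEnt_deph hρ.isHermitian, Fintype.sum_prod_type, p]
  have hAB : vnEnt (deph (ptrC ρ)) = ∑ i, ∑ j, Real.negMulLog (∑ k, p i j k) := by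
    simp only [vnEnt_deph (posSemidef_ptrC hρ).isHermitian, Fintype.sum_prod_type, ptrC,
      Complex.re_sum, p]
  have hAC : vnEnt (deph (ptrB ρ)) = ∑ i, ∑ k, Real.negMulLog (∑ j, p i j k) := by
    simp only [vnEnt_deph (posSemidef_ptrB hρ).isHermitian, Fintype.sum_prod_type, ptrB,
      Complex.re_sum, p]
  have hA : vnEnt (ptrBC ρ) ≤ ∑ i, Real.negMulLog (∑ j, ∑ k, p i j k) := by
    simpa only [ptrBC, Complex.re_sum] using vnEnt_le_sum_negMulLog_diag (posSemidef_ptrBC hρ)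
  unfold cohRE
  linarith [negMulLog_strongSubadditivity p hp]

/-- If a tripartite density matrix `ρ_ABC` saturates strong subadditivity,
i.e. `S(ρ_A) + S(ρ_ABC) = S(ρ_AB) + S(ρ_AC)`, then
`C(ρ_AB) + C(ρ_AC) ≥ C(ρ_ABC)`, where `C` is the relative entropy of coherence in the fixed
product basis. -/
theorem saturated_SSA_implies_subadditivity
    (ρ : Matrix (Fin a × Fin b × Fin c) (Fin a × Fin b × Fin c) ℂ)
    (hρ : ρ.PosSemidef) (htr : ρ.trace = 1)
    (hSSA : vnEnt (ptrBC ρ) + vnEnt ρ = vnEnt (ptrC ρ) + vnEnt (ptrB ρ)) :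
    cohRE ρ ≤ cohRE (ptrC ρ) + cohRE (ptrB ρ) :=
  saturated_SSA_implies_subadditivity_general ρ hρ hSSA
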